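/- Let a be a unit vector in ℝ^{n+1} and let A = { x ∈ 𝕊ⁿ : ⟨x, a⟩ = 1/2 } be the corresponding small circle of the unit sphere 𝕊ⁿ (with geodesic distance d(x,y) = arccos⟨x,y⟩). Then A is super-regular at every point z ∈ A: for every ε ∈ (0,1) there exists r > 0 such that for all y ∈ B(z, r/2) \ A, x ∈ P_A(y), and x' ∈ A ∩ B(z, r) with x' ≠ x, the spherical angle at x between the geodesics [x,y] and [x,x'] is at least π/2 − ε. -/

import Mathlib

open scoped RealInnerProductSpace

/-- The intrinsic (geodesic) distance on the unit sphere `𝕊ⁿ ⊆ ℝ^{n+1}`. -/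
noncomputable def sphereDist {n : ℕ} (x y : EuclideanSpace ℝ (Fin (n + 1))) : ℝ :=
  Real.arccos ⟪x, y⟫

/-- The spherical (Alexandrov) angle at `x` between the geodesics from `x` to `y`
and from `x` to `z`, computed via the tangent vectors at `x`. -/
noncomputable def sphereAngle {n : ℕ} (x y z : EuclideanSpace ℝ (Fin (n + 1))) : ℝ :=
  InnerProductGeometry.angle (y - ⟪x, y⟫ • x) (z - ⟪x, z⟫ • x)

private lemma eq_of_sq_eq_sq' {a b : ℝ} (ha : 0 ≤ a) (hb : 0 ≤ b) (h : a ^ 2 = b ^ 2) :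
    a = b := by
  calc a = Real.sqrt (a ^ 2) := (Real.sqrt_sq ha).symm
    _ = Real.sqrt (b ^ 2) := by rw [h]
    _ = b := Real.sqrt_sq hb

private lemma le_of_sq_le_sq' {a b : ℝ} (h : a ^ 2 ≤ b ^ 2) (hb : 0 ≤ b) : a ≤ b := by
  nlinarith [sq_nonneg (a + b), sq_nonneg (a - b)]

set_option maxHeartbeats 2000000 in
/-- The small circle `A = {x ∈ 𝕊ⁿ : ⟨x,a⟩ = 1/2}` is super-regular at each of its
points: for every `ε ∈ (0,1)` there is `r > 0` such that for all `y ∈ B(z,r/2) \ A`,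
`x ∈ P_A(y)`, and `x' ∈ A ∩ B(z,r)` with `x' ≠ x`, the spherical angle at `x`
between `y` and `x'` is at least `π/2 − ε`. -/
theorem small_circle_super_regular {n : ℕ} (a : EuclideanSpace ℝ (Fin (n + 1)))
    (ha : ‖a‖ = 1) (z : EuclideanSpace ℝ (Fin (n + 1)))
    (hz : ‖z‖ = 1 ∧ ⟪z, a⟫ = 1 / 2) (ε : ℝ) (hε : ε ∈ Set.Ioo (0 : ℝ) 1) :
    ∃ r > (0 : ℝ), ∀ y : EuclideanSpace ℝ (Fin (n + 1)), ‖y‖ = 1 →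
      sphereDist z y < r / 2 → ¬(‖y‖ = 1 ∧ ⟪y, a⟫ = 1 / 2) →
      ∀ x : EuclideanSpace ℝ (Fin (n + 1)), (‖x‖ = 1 ∧ ⟪x, a⟫ = 1 / 2) →
        (∀ w : EuclideanSpace ℝ (Fin (n + 1)), ‖w‖ = 1 → ⟪w, a⟫ = 1 / 2 →
          sphereDist y x ≤ sphereDist y w) →
        ∀ x' : EuclideanSpace ℝ (Fin (n + 1)), (‖x'‖ = 1 ∧ ⟪x', a⟫ = 1 / 2) →
          sphereDist z x' < r → x' ≠ x →
            Real.pi / 2 - ε ≤ sphereAngle x y x' := by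
  obtain ⟨hε0, hε1⟩ := hε
  obtain ⟨hz1, hza⟩ := hz
  have hpi : (3 : ℝ) < Real.pi := Real.pi_gt_three
  have hS : 0 < Real.sin ε := Real.sin_pos_of_pos_of_lt_pi hε0 (by linarith)
  have hS1 : Real.sin ε ≤ 1 := Real.sin_le_one ε
  set S := Real.sin ε with hSdef
  set δ : ℝ := min 1 (3 * S ^ 2) with hδdef
  have hδpos : 0 < δ := lt_min one_pos (by positivity)
  have hδ1 : δ ≤ 1 := min_le_left _ _
  have hδ3S : δ ≤ 3 * S ^ 2 := min_le_right _ _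
  have hrpos : 0 < Real.sqrt (δ / 2) := Real.sqrt_pos.mpr (by linarith)
  refine ⟨Real.sqrt (δ / 2), hrpos, ?_⟩
  set r := Real.sqrt (δ / 2) with hrdef
  have hr2 : r ^ 2 = δ / 2 := Real.sq_sqrt (by linarith)
  have hr1 : r ≤ 1 := by nlinarith only [hr2, hδ1, hrpos]
  clear_value S δ r
  intro y hy1 hdzy hyA x hxA hmin x' hx'A hdzx' hne
  clear hyA hne
  obtain ⟨hx1, hxa⟩ := hxA
  obtain ⟨hx'1, hx'a⟩ := hx'A
  -- inner products of unit vectors lie in [-1, 1]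
  have hIcc : ∀ u v : EuclideanSpace ℝ (Fin (n + 1)), ‖u‖ = 1 → ‖v‖ = 1 →
      -1 ≤ ⟪u, v⟫ ∧ ⟪u, v⟫ ≤ 1 := by
    intro u v hu hv
    have h := abs_real_inner_le_norm u v
    rw [hu, hv] at h
    have h' := abs_le.mp (by linarith : |⟪u, v⟫| ≤ 1)
    exact ⟨h'.1, h'.2⟩
  -- scalar form of minimality
  have hminS : ∀ w : EuclideanSpace ℝ (Fin (n + 1)), ‖w‖ = 1 → ⟪w, a⟫ = 1 / 2 →
      ⟪y, w⟫ ≤ ⟪y, x⟫ := by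
    intro w hw1 hwa
    by_contra hcon
    push_neg at hcon
    have h1 : Real.arccos ⟪y, x⟫ ≤ Real.arccos ⟪y, w⟫ := hmin w hw1 hwa
    have h2 := Real.strictAntiOn_arccos
      (Set.mem_Icc.mpr ⟨(hIcc y x hy1 hx1).1, (hIcc y x hy1 hx1).2⟩)
      (Set.mem_Icc.mpr ⟨(hIcc y w hy1 hw1).1, (hIcc y w hy1 hw1).2⟩) hcon
    linarith
  -- basic inner product facts
  have haa : ⟪a, a⟫ = 1 := by
    rw [real_inner_self_eq_norm_sq, ha]; norm_num
  have hxx : ⟪x, x⟫ = 1 := by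
    rw [real_inner_self_eq_norm_sq, hx1]; norm_num
  have hax : ⟪a, x⟫ = 1 / 2 := by rw [real_inner_comm]; exact hxa
  have hax' : ⟪a, x'⟫ = 1 / 2 := by rw [real_inner_comm]; exact hx'a
  set α := ⟪y, a⟫ with hαdef
  set β := ‖y - α • a‖ with hβdef
  have hβ0 : 0 ≤ β := norm_nonneg _
  have hay : ⟪a, y⟫ = α := by rw [real_inner_comm]
  have hβsq : β ^ 2 = 1 - α ^ 2 := by
    have h1 : β ^ 2 = ‖y‖ ^ 2 - 2 * ⟪y, α • a⟫ + ‖α • a‖ ^ 2 := norm_sub_sq_real y (α • a)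
    rw [real_inner_smul_right, hy1, norm_smul, ha] at h1
    simp only [Real.norm_eq_abs, mul_one] at h1
    rw [h1, sq_abs, ← hαdef]
    ring
  have hs3 : Real.sqrt 3 ^ 2 = 3 := Real.sq_sqrt (by norm_num)
  have hs3pos : (0 : ℝ) < Real.sqrt 3 := Real.sqrt_pos.mpr (by norm_num)
  have hma : ⟪y - α • a, a⟫ = 0 := by
    rw [inner_sub_left, real_inner_smul_left, haa, ← hαdef]
    ring
  have hma' : ⟪a, y - α • a⟫ = 0 := by rw [real_inner_comm]; exact hma
  clear_value α
  have hm2 : ‖x - (1 / 2 : ℝ) • a‖ ^ 2 = 3 / 4 := by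
    rw [norm_sub_sq_real, real_inner_smul_right, hx1, norm_smul, ha, hxa]
    simp only [Real.norm_eq_abs, mul_one]
    rw [sq_abs]
    norm_num
  have hm : ‖x - (1 / 2 : ℝ) • a‖ = Real.sqrt 3 / 2 := by
    apply eq_of_sq_eq_sq' (norm_nonneg _) (by positivity)
    rw [hm2]
    linear_combination (-1 / 4 : ℝ) * hs3
  -- the key identity: the projection x lies in the direction of y within the circle
  have K : Real.sqrt 3 • (y - α • a) = (2 * β) • x - β • a := by
    rcases hβ0.eq_or_lt with hβz | hβpos
    · have h0 : y - α • a = 0 := norm_eq_zero.mp (hβdef ▸ hβz.symm)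
      rw [h0, ← hβz]
      simp
    · set w := (1 / 2 : ℝ) • a + (Real.sqrt 3 / (2 * β)) • (y - α • a) with hwdef
      have hwa : ⟪w, a⟫ = 1 / 2 := by
        rw [hwdef, inner_add_left, real_inner_smul_left, real_inner_smul_left, haa, hma]
        ring
      have hw1 : ‖w‖ = 1 := by
        apply eq_of_sq_eq_sq' (norm_nonneg _) zero_le_one
        have e1 : ‖(1 / 2 : ℝ) • a‖ = 1 / 2 := by
          rw [norm_smul, ha]; simp
        have e2 : ‖(Real.sqrt 3 / (2 * β)) • (y - α • a)‖ = Real.sqrt 3 / 2 := by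
          rw [norm_smul, ← hβdef, Real.norm_eq_abs, abs_of_pos (by positivity)]
          field_simp
        rw [hwdef, norm_add_sq_real, e1, e2, real_inner_smul_left, real_inner_smul_right,
          hma']
        linear_combination (1 / 4 : ℝ) * hs3
      have hminw := hminS w hw1 hwa
      have h5 : ⟪y, y - α • a⟫ = β ^ 2 := by
        rw [inner_sub_right, real_inner_smul_right, real_inner_self_eq_norm_sq, hy1, ← hαdef,
          hβsq]
        ring
      have hyw : ⟪y, w⟫ = α / 2 + Real.sqrt 3 * β / 2 := by
        rw [hwdef]
        simp only [inner_add_right, real_inner_smul_right]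
        rw [h5, ← hαdef]
        field_simp
      have hinner : ⟪y - α • a, x - (1 / 2 : ℝ) • a⟫ = ⟪y, x⟫ - α / 2 := by
        simp only [inner_sub_left, inner_sub_right, real_inner_smul_left,
          real_inner_smul_right]
        rw [hax, haa, ← hαdef]
        ring
      have hCSle := real_inner_le_norm (y - α • a) (x - (1 / 2 : ℝ) • a)
      rw [← hβdef, hm, hinner] at hCSle
      have hCSeq : ⟪y - α • a, x - (1 / 2 : ℝ) • a⟫ =
          ‖y - α • a‖ * ‖x - (1 / 2 : ℝ) • a‖ := by
        rw [← hβdef, hm, hinner]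
        rw [hyw] at hminw
        linarith
      have hpar := inner_eq_norm_mul_iff_real.mp hCSeq
      rw [← hβdef, hm] at hpar
      -- hpar : (√3/2) • (y - α • a) = β • (x - (1/2) • a)
      linear_combination (norm := module) (2 : ℝ) • hpar
  -- scalar consequences of K
  have hKx : Real.sqrt 3 * (⟪x, y⟫ - α * (1 / 2)) = 2 * β * 1 - β * (1 / 2) := by
    have h := congrArg (fun w : EuclideanSpace ℝ (Fin (n + 1)) => (⟪w, x⟫ : ℝ)) K
    simp only [inner_sub_left, real_inner_smul_left] at h
    rw [real_inner_comm x y] at h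
    rw [hax, hxx] at h
    exact h
  have hKx' : Real.sqrt 3 * (⟪y, x'⟫ - α * (1 / 2)) = 2 * β * ⟪x, x'⟫ - β * (1 / 2) := by
    have h := congrArg (fun w : EuclideanSpace ℝ (Fin (n + 1)) => (⟪w, x'⟫ : ℝ)) K
    simp only [inner_sub_left, real_inner_smul_left] at h
    rw [hax'] at h
    exact h
  have h2c : 2 * Real.sqrt 3 * ⟪x, y⟫ = Real.sqrt 3 * α + 3 * β := by
    linear_combination 2 * hKx
  -- distance estimates giving a lower bound on ⟪x, x'⟫
  have hzy : Real.cos (r / 2) ≤ ⟪z, y⟫ := by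
    have h1 : Real.arccos ⟪z, y⟫ < r / 2 := hdzy
    have h2 := Real.cos_le_cos_of_nonneg_of_le_pi (Real.arccos_nonneg _) (by linarith) h1.le
    rwa [Real.cos_arccos (hIcc z y hz1 hy1).1 (hIcc z y hz1 hy1).2] at h2
  have hzx' : Real.cos r ≤ ⟪z, x'⟫ := by
    have h1 : Real.arccos ⟪z, x'⟫ < r := hdzx'
    have h2 := Real.cos_le_cos_of_nonneg_of_le_pi (Real.arccos_nonneg _) (by linarith) h1.le
    rwa [Real.cos_arccos (hIcc z x' hz1 hx'1).1 (hIcc z x' hz1 hx'1).2] at h2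
  have hzylb : 1 - (r / 2) ^ 2 / 2 ≤ ⟪z, y⟫ :=
    le_trans (Real.one_sub_sq_div_two_le_cos (x := r / 2)) hzy
  have hzx'lb : 1 - r ^ 2 / 2 ≤ ⟪z, x'⟫ :=
    le_trans (Real.one_sub_sq_div_two_le_cos (x := r)) hzx'
  have hyz2 : ‖y - z‖ ^ 2 ≤ (r / 2) ^ 2 := by
    rw [norm_sub_sq_real, hy1, hz1]
    have hc : (⟪z, y⟫ : ℝ) = ⟪y, z⟫ := real_inner_comm y z
    linarith only [hzylb, hc]
  have hxy2 : ‖x - y‖ ^ 2 ≤ (r / 2) ^ 2 := by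
    rw [norm_sub_sq_real, hx1, hy1]
    have h1 := hminS z hz1 hza
    have hc1 : (⟪y, x⟫ : ℝ) = ⟪x, y⟫ := real_inner_comm x y
    have hc2 : (⟪z, y⟫ : ℝ) = ⟪y, z⟫ := real_inner_comm y z
    linarith only [h1, hc1, hc2, hzylb]
  have hzx'2 : ‖z - x'‖ ^ 2 ≤ r ^ 2 := by
    rw [norm_sub_sq_real, hz1, hx'1]
    linarith only [hzx'lb]
  have htri : ‖x - x'‖ ≤ 2 * r := by
    have h1 : x - x' = (x - y) + (y - z) + (z - x') := by abel
    have h2 : ‖x - x'‖ ≤ ‖x - y‖ + ‖y - z‖ + ‖z - x'‖ := by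
      rw [h1]
      exact (norm_add_le _ _).trans (add_le_add_left (norm_add_le _ _) _)
    have b1 : ‖x - y‖ ≤ r / 2 := le_of_sq_le_sq' hxy2 (by positivity)
    have b2 : ‖y - z‖ ≤ r / 2 := le_of_sq_le_sq' hyz2 (by positivity)
    have b3 : ‖z - x'‖ ≤ r := le_of_sq_le_sq' hzx'2 hrpos.le
    linarith only [h2, b1, b2, b3]
  have htlow : 1 - δ ≤ ⟪x, x'⟫ := by
    have h2 : ‖x - x'‖ ^ 2 ≤ (2 * r) ^ 2 :=
      pow_le_pow_left₀ (norm_nonneg _) htri 2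
    rw [norm_sub_sq_real, hx1, hx'1] at h2
    linarith only [hr2, h2]
  have ht1 : ⟪x, x'⟫ ≤ 1 := (hIcc x x' hx1 hx'1).2
  -- the tangent vectors
  set u := y - ⟪x, y⟫ • x with hudef
  set v := x' - ⟪x, x'⟫ • x with hvdef
  have hgoal : sphereAngle x y x' = Real.arccos (⟪u, v⟫ / (‖u‖ * ‖v‖)) := rfl
  clear_value u v
  have hu2 : ‖u‖ ^ 2 = 1 - ⟪x, y⟫ ^ 2 := by
    rw [hudef, norm_sub_sq_real, real_inner_smul_right, norm_smul, hy1, hx1,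
      real_inner_comm x y]
    simp only [Real.norm_eq_abs, mul_one]
    rw [sq_abs]
    ring
  have hv2 : ‖v‖ ^ 2 = 1 - ⟪x, x'⟫ ^ 2 := by
    rw [hvdef, norm_sub_sq_real, real_inner_smul_right, norm_smul, hx'1, hx1,
      real_inner_comm x x']
    simp only [Real.norm_eq_abs, mul_one]
    rw [sq_abs]
    ring
  have hiuv : ⟪u, v⟫ = ⟪y, x'⟫ - ⟪x, y⟫ * ⟪x, x'⟫ := by
    rw [hudef, hvdef]
    simp only [inner_sub_left, inner_sub_right, real_inner_smul_left, real_inner_smul_right]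
    rw [real_inner_comm x y, hxx]
    ring
  have huv : 2 * Real.sqrt 3 * ⟪u, v⟫ = (1 - ⟪x, x'⟫) * (Real.sqrt 3 * α - β) := by
    linear_combination (2 * Real.sqrt 3) * hiuv + 2 * hKx' - ⟪x, x'⟫ * h2c
  -- the main estimate on the cosine of the angle
  have hT : ⟪u, v⟫ / (‖u‖ * ‖v‖) ≤ S := by
    rcases le_or_gt ⟪u, v⟫ 0 with hI | hI
    · exact (div_nonpos_of_nonpos_of_nonneg hI
        (mul_nonneg (norm_nonneg _) (norm_nonneg _))).trans hS.le
    · have hD : 0 < ‖u‖ * ‖v‖ := hI.trans_le (real_inner_le_norm u v)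
      rw [div_le_iff₀ hD]
      have h12 : 12 * ⟪u, v⟫ ^ 2 = ((1 - ⟪x, x'⟫) * (Real.sqrt 3 * α - β)) ^ 2 := by
        have h := congrArg (fun w : ℝ => w ^ 2) huv
        linear_combination h - 4 * ⟪u, v⟫ ^ 2 * hs3
      have hc2 : 12 * ⟪x, y⟫ ^ 2 = (Real.sqrt 3 * α + 3 * β) ^ 2 := by
        linear_combination (2 * Real.sqrt 3 * ⟪x, y⟫ + (Real.sqrt 3 * α + 3 * β)) * h2c -
          4 * ⟪x, y⟫ ^ 2 * hs3
      have hq4 : 4 * (1 - ⟪x, y⟫ ^ 2) = (Real.sqrt 3 * α - β) ^ 2 := by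
        linear_combination (-1 / 3 : ℝ) * hc2 - (4 / 3) * α ^ 2 * hs3 - 4 * hβsq
      have hD2 : (‖u‖ * ‖v‖) ^ 2 = (1 - ⟪x, y⟫ ^ 2) * (1 - ⟪x, x'⟫ ^ 2) := by
        rw [mul_pow, hu2, hv2]
      have hA0 : 0 ≤ 1 - ⟪x, x'⟫ := by linarith only [ht1]
      have hA3 : 1 - ⟪x, x'⟫ ≤ 3 * S ^ 2 := by linarith only [htlow, hδ3S]
      have ht0 : 0 ≤ ⟪x, x'⟫ := by linarith only [htlow, hδ1]
      have hqsq : 0 ≤ (Real.sqrt 3 * α - β) ^ 2 := sq_nonneg _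
      have hint1 : 0 ≤ (3 * S ^ 2 - (1 - ⟪x, x'⟫)) *
          ((1 - ⟪x, x'⟫) * (Real.sqrt 3 * α - β) ^ 2) :=
        mul_nonneg (by linarith only [hA3]) (mul_nonneg hA0 hqsq)
      have hint2 : 0 ≤ ⟪x, x'⟫ * (S ^ 2 * ((1 - ⟪x, x'⟫) * (Real.sqrt 3 * α - β) ^ 2)) :=
        mul_nonneg ht0 (mul_nonneg (sq_nonneg S) (mul_nonneg hA0 hqsq))
      have e1 : (S * (‖u‖ * ‖v‖)) ^ 2 =
          S ^ 2 * ((Real.sqrt 3 * α - β) ^ 2 / 4 *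
            ((1 - ⟪x, x'⟫) * (1 + ⟪x, x'⟫))) := by
        linear_combination S ^ 2 * hD2 + (S ^ 2 * (1 - ⟪x, x'⟫ ^ 2) / 4) * hq4
      have hfin : ⟪u, v⟫ ^ 2 ≤ (S * (‖u‖ * ‖v‖)) ^ 2 := by
        linarith only [h12, e1, hint1, hint2]
      have hsum : 0 < ⟪u, v⟫ + S * (‖u‖ * ‖v‖) := by
        have := mul_pos hS hD
        linarith only [hI, this]
      nlinarith only [hfin, hsum]
  have hT1 : -1 ≤ ⟪u, v⟫ / (‖u‖ * ‖v‖) := by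
    have h := abs_real_inner_div_norm_mul_norm_le_one u v
    have h' := abs_le.mp h
    exact h'.1
  have harc : Real.arccos S = Real.pi / 2 - ε := by
    rw [hSdef, ← Real.cos_pi_div_two_sub, Real.arccos_cos (by linarith) (by linarith)]
  rw [hgoal, ← harc]
  rcases hT.lt_or_eq with h | h
  · exact (Real.strictAntiOn_arccos (Set.mem_Icc.mpr ⟨hT1, by linarith⟩)
      (Set.mem_Icc.mpr ⟨by linarith, hS1⟩) h).le
  · rw [h]
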